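/- If the classical d-dimensional skew-normal density f(x) = 2·φ_d(x; Ω)·Φ(αᵀω⁻¹x) with Ω block-diagonal, Ω = diag(Ω₁, Ω₂), factorizes as a product f(x) = g₁(x₁)·g₂(x₂) of functions of the corresponding two blocks of coordinates, then at least one of the two corresponding blocks α₁, α₂ of the slant parameter α is zero (so at most one factor is a skew-normal with non-vanishing slant, the other being normal). -/

import Mathlib

open Real MeasureTheory

/-- Standard normal density. -/
noncomputable def stdNormalPDF (x : ℝ) : ℝ :=
  (Real.sqrt (2 * Real.pi))⁻¹ * Real.exp (-x ^ 2 / 2)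

/-- Standard normal distribution function. -/
noncomputable def stdNormalCDF (x : ℝ) : ℝ :=
  ∫ t in Set.Iic x, stdNormalPDF t

/-- Density of a centered multivariate normal with covariance `S`, for a
general finite index type. -/
noncomputable def mvNormalPDF' {ι : Type*} [Fintype ι] [DecidableEq ι]
    (S : Matrix ι ι ℝ) (x : ι → ℝ) : ℝ :=
  ((2 * Real.pi) ^ (Fintype.card ι : ℝ) * S.det) ^ (-(1 : ℝ) / 2) *
    Real.exp (-(dotProduct x (S⁻¹.mulVec x)) / 2)

/-- Centered classical skew-normal density `2 φ_d(x; Ω) Φ(αᵀ ω⁻¹ x)`. -/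
noncomputable def classicalSNPDF0 {ι : Type*} [Fintype ι] [DecidableEq ι]
    (Ω : Matrix ι ι ℝ) (α : ι → ℝ) (x : ι → ℝ) : ℝ :=
  2 * mvNormalPDF' Ω x * stdNormalCDF (∑ i, α i * (x i / Real.sqrt (Ω i i)))

/-! Restrict `f` to the plane `x = u • e₁ + v • e₂`, where `e₁`, `e₂` are coordinate vectors in
the two blocks scaled so that the skewing argument `αᵀ ω⁻¹ x` equals `u + v`. The factorization
gives `f (x + y) f 0 = f x f y` for `x`, `y` in different blocks; the Gaussian factor contributes
only `exp (κ u v)` from the cross term of the quadratic form, leaving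
`Φ (u + v) Φ 0 = exp (κ u v) Φ u Φ v`. At `v = 1` this reads `Φ (u + 1) / Φ u = r exp (κ u)` with
`r = Φ 1 / Φ 0 > 1`: for `κ < 0` the ratio eventually drops below `1`, contradicting
monotonicity, and for `κ ≥ 0` it forces `Φ n ≥ Φ 0 rⁿ`, contradicting boundedness. -/

open Matrix

lemma stdNormalPDF_eq_gaussianPDFReal : stdNormalPDF = ProbabilityTheory.gaussianPDFReal 0 1 := by
  ext x
  simp [stdNormalPDF, ProbabilityTheory.gaussianPDFReal]

lemma stdNormalPDF_pos (x : ℝ) : 0 < stdNormalPDF x := by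
  unfold stdNormalPDF
  positivity

lemma integrable_stdNormalPDF : Integrable stdNormalPDF :=
  stdNormalPDF_eq_gaussianPDFReal ▸ ProbabilityTheory.integrable_gaussianPDFReal 0 1

lemma stdNormalCDF_strictMono : StrictMono stdNormalCDF := by
  intro s t hst
  have hdiff : stdNormalCDF t - stdNormalCDF s = ∫ x in s..t, stdNormalPDF x :=
    intervalIntegral.integral_Iic_sub_Iic integrable_stdNormalPDF.integrableOn
      integrable_stdNormalPDF.integrableOn
  have hpos : 0 < ∫ x in s..t, stdNormalPDF x :=
    intervalIntegral.intervalIntegral_pos_of_pos integrable_stdNormalPDF.intervalIntegrable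
      stdNormalPDF_pos hst
  linarith

lemma stdNormalCDF_pos (x : ℝ) : 0 < stdNormalCDF x :=
  (setIntegral_nonneg measurableSet_Iic fun t _ => (stdNormalPDF_pos t).le).trans_lt
    (stdNormalCDF_strictMono (sub_one_lt x))

lemma bddAbove_range_stdNormalCDF : BddAbove (Set.range stdNormalCDF) :=
  ⟨∫ t, stdNormalPDF t, Set.forall_mem_range.mpr fun _ =>
    setIntegral_le_integral integrable_stdNormalPDF
      (Filter.Eventually.of_forall fun t => (stdNormalPDF_pos t).le)⟩

theorem StrictMono.not_forall_twisted_mul {φ : ℝ → ℝ} (hφ : StrictMono φ) (h0 : 0 < φ 0)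
    (hbdd : BddAbove (Set.range φ)) (κ : ℝ) :
    ¬ ∀ u v, φ (u + v) * φ 0 = exp (κ * (u * v)) * (φ u * φ v) := by
  intro h
  have h01 : φ 0 < φ 1 := hφ one_pos
  have h1 : 0 < φ 1 := h0.trans h01
  have hpos : ∀ {u}, 0 ≤ u → 0 < φ u := fun hu => h0.trans_le (hφ.monotone hu)
  have hstep : ∀ u, φ (u + 1) * φ 0 = exp (κ * u) * (φ u * φ 1) := by
    simpa only [mul_one] using fun u => h u 1
  rcases lt_or_ge κ 0 with hκ | hκ
  · have hlim : Filter.Tendsto (fun u => exp (κ * u)) Filter.atTop (nhds 0) :=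
      tendsto_exp_atBot.comp (Filter.tendsto_id.const_mul_atTop_of_neg hκ)
    obtain ⟨u, hu, hu0⟩ := ((hlim.eventually (gt_mem_nhds (div_pos h0 h1))).and
      (Filter.eventually_ge_atTop 0)).exists
    rw [lt_div_iff₀ h1] at hu
    have hdecr : φ (u + 1) * φ 0 < φ u * φ 0 := by
      rw [hstep]
      nlinarith [hpos hu0]
    exact (hφ (lt_add_one u)).not_gt (lt_of_mul_lt_mul_right hdecr h0.le)
  · obtain ⟨M, hM⟩ := hbdd
    have hgrow : ∀ n : ℕ, φ 0 * (φ 1 / φ 0) ^ n ≤ φ n := by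
      intro n
      induction n with
      | zero => simp
      | succ n ih =>
        have hmul : φ n * φ 1 ≤ φ (n + 1) * φ 0 := by
          rw [hstep]
          exact le_mul_of_one_le_left (mul_pos (hpos n.cast_nonneg) h1).le
            (one_le_exp (by positivity))
        rw [pow_succ, Nat.cast_succ, ← mul_assoc, mul_div_assoc', div_le_iff₀ h0]
        nlinarith
    obtain ⟨n, hn⟩ := pow_unbounded_of_one_lt (M / φ 0) ((one_lt_div h0).mpr h01)
    have := (hgrow n).trans (hM (Set.mem_range_self _))
    rw [div_lt_iff₀ h0] at hn
    linarith

lemma dotProduct_mulVec_add_add {ι R : Type*} [Fintype ι] [CommSemiring R] (M : Matrix ι ι R)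
    (x y : ι → R) :
    (x + y) ⬝ᵥ M *ᵥ (x + y) = x ⬝ᵥ M *ᵥ x + y ⬝ᵥ M *ᵥ y + (x ⬝ᵥ M *ᵥ y + y ⬝ᵥ M *ᵥ x) := by
  simp only [mulVec_add, dotProduct_add, add_dotProduct]
  abel

section Gaussian

variable {ι : Type*} [Fintype ι] [DecidableEq ι]

lemma mvNormalPDF'_pos {S : Matrix ι ι ℝ} (hS : 0 < S.det) (x : ι → ℝ) :
    0 < mvNormalPDF' S x := by
  unfold mvNormalPDF'
  positivity

lemma mvNormalPDF'_add_mul_mvNormalPDF'_zero (S : Matrix ι ι ℝ) (x y : ι → ℝ) :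
    mvNormalPDF' S (x + y) * mvNormalPDF' S 0 =
      exp (-(x ⬝ᵥ S⁻¹ *ᵥ y + y ⬝ᵥ S⁻¹ *ᵥ x) / 2) * (mvNormalPDF' S x * mvNormalPDF' S y) := by
  have hexp : ∀ a b c : ℝ,
      exp (-(a + b + c) / 2) = exp (-c / 2) * exp (-a / 2) * exp (-b / 2) := by
    intro a b c
    rw [← exp_add, ← exp_add]
    ring_nf
  simp only [mvNormalPDF', dotProduct_mulVec_add_add, hexp, mulVec_zero, dotProduct_zero,
    neg_zero, zero_div, exp_zero]
  ring

/-- `ω⁻¹ α`, so that the skewing argument `αᵀ ω⁻¹ x` is `scaledSlant Ω α ⬝ᵥ x`. -/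
noncomputable def scaledSlant (Ω : Matrix ι ι ℝ) (α : ι → ℝ) : ι → ℝ :=
  fun i => α i / √(Ω i i)

lemma classicalSNPDF0_eq (Ω : Matrix ι ι ℝ) (α x : ι → ℝ) :
    classicalSNPDF0 Ω α x = 2 * mvNormalPDF' Ω x * stdNormalCDF (scaledSlant Ω α ⬝ᵥ x) := by
  simp only [classicalSNPDF0, scaledSlant, dotProduct, div_mul_eq_mul_div, mul_div_assoc]

lemma scaledSlant_dotProduct_single {Ω : Matrix ι ι ℝ} {α : ι → ℝ} {k : ι} (hΩ : 0 < Ω k k)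
    (hα : α k ≠ 0) : scaledSlant Ω α ⬝ᵥ Pi.single k (√(Ω k k) / α k) = 1 := by
  have : √(Ω k k) ≠ 0 := (sqrt_pos.mpr hΩ).ne'
  simp only [scaledSlant, dotProduct_single]
  field_simp

lemma stdNormalCDF_add_mul_of_classicalSNPDF0_add_mul {Ω : Matrix ι ι ℝ} (hΩ : 0 < Ω.det)
    {α x y : ι → ℝ}
    (h : classicalSNPDF0 Ω α (x + y) * classicalSNPDF0 Ω α 0 =
      classicalSNPDF0 Ω α x * classicalSNPDF0 Ω α y) :
    stdNormalCDF (scaledSlant Ω α ⬝ᵥ x + scaledSlant Ω α ⬝ᵥ y) * stdNormalCDF 0 =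
      exp ((x ⬝ᵥ Ω⁻¹ *ᵥ y + y ⬝ᵥ Ω⁻¹ *ᵥ x) / 2) *
        (stdNormalCDF (scaledSlant Ω α ⬝ᵥ x) * stdNormalCDF (scaledSlant Ω α ⬝ᵥ y)) := by
  set c := x ⬝ᵥ Ω⁻¹ *ᵥ y + y ⬝ᵥ Ω⁻¹ *ᵥ x
  set a := scaledSlant Ω α ⬝ᵥ x
  set b := scaledSlant Ω α ⬝ᵥ y
  have hN := mvNormalPDF'_add_mul_mvNormalPDF'_zero Ω x y
  have hpos : 0 < mvNormalPDF' Ω x * mvNormalPDF' Ω y :=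
    mul_pos (mvNormalPDF'_pos hΩ x) (mvNormalPDF'_pos hΩ y)
  simp only [classicalSNPDF0_eq, dotProduct_add, dotProduct_zero] at h
  have hcancel : exp (-c / 2) * (stdNormalCDF (a + b) * stdNormalCDF 0) =
      stdNormalCDF a * stdNormalCDF b := by
    apply mul_left_cancel₀ (mul_pos four_pos hpos).ne'
    linear_combination h - 4 * stdNormalCDF (a + b) * stdNormalCDF 0 * hN
  rw [← hcancel, ← mul_assoc, ← exp_add, ← add_div, add_neg_cancel, zero_div, exp_zero,
    one_mul]

end Gaussian

lemma apply_add_mul_apply_zero_of_factorization {ι₁ ι₂ R M : Type*} [AddZeroClass R]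
    [CommMonoid M]
    {F : (ι₁ ⊕ ι₂ → R) → M} {g₁ : (ι₁ → R) → M} {g₂ : (ι₂ → R) → M}
    (hF : ∀ x, F x = g₁ (x ∘ Sum.inl) * g₂ (x ∘ Sum.inr)) {x y : ι₁ ⊕ ι₂ → R}
    (hx : x ∘ Sum.inr = 0) (hy : y ∘ Sum.inl = 0) : F (x + y) * F 0 = F x * F y := by
  have hl : (x + y) ∘ Sum.inl = x ∘ Sum.inl := by
    ext k
    simp [show y (Sum.inl k) = 0 from congrFun hy k]
  have hr : (x + y) ∘ Sum.inr = y ∘ Sum.inr := by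
    ext k
    simp [show x (Sum.inr k) = 0 from congrFun hx k]
  simp only [hF, hl, hr, hx, hy, Pi.zero_comp]
  ac_rfl

theorem classical_skew_normal_factorization_general {d₁ d₂ : ℕ}
    (Ω : Matrix (Fin d₁ ⊕ Fin d₂) (Fin d₁ ⊕ Fin d₂) ℝ) (hΩ : Ω.PosDef)
    (α : Fin d₁ ⊕ Fin d₂ → ℝ)
    (hfact : ∃ (g₁ : (Fin d₁ → ℝ) → ℝ) (g₂ : (Fin d₂ → ℝ) → ℝ),
      ∀ x : Fin d₁ ⊕ Fin d₂ → ℝ,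
        classicalSNPDF0 Ω α x = g₁ (x ∘ Sum.inl) * g₂ (x ∘ Sum.inr)) :
    (∀ i : Fin d₁, α (Sum.inl i) = 0) ∨ (∀ j : Fin d₂, α (Sum.inr j) = 0) := by
  by_contra! h
  obtain ⟨⟨i, hi⟩, ⟨j, hj⟩⟩ := h
  obtain ⟨g₁, g₂, hg⟩ := hfact
  set e₁ : Fin d₁ ⊕ Fin d₂ → ℝ :=
    Pi.single (Sum.inl i) (√(Ω (Sum.inl i) (Sum.inl i)) / α (Sum.inl i))
  set e₂ : Fin d₁ ⊕ Fin d₂ → ℝ :=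
    Pi.single (Sum.inr j) (√(Ω (Sum.inr j) (Sum.inr j)) / α (Sum.inr j))
  have he₁ : scaledSlant Ω α ⬝ᵥ e₁ = 1 := scaledSlant_dotProduct_single hΩ.diag_pos hi
  have he₂ : scaledSlant Ω α ⬝ᵥ e₂ = 1 := scaledSlant_dotProduct_single hΩ.diag_pos hj
  refine stdNormalCDF_strictMono.not_forall_twisted_mul (stdNormalCDF_pos 0)
    bddAbove_range_stdNormalCDF ((e₁ ⬝ᵥ Ω⁻¹ *ᵥ e₂ + e₂ ⬝ᵥ Ω⁻¹ *ᵥ e₁) / 2) fun u v => ?_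
  have hrect := apply_add_mul_apply_zero_of_factorization hg (x := u • e₁) (y := v • e₂)
    (by ext k; simp [e₁]) (by ext k; simp [e₂])
  have := stdNormalCDF_add_mul_of_classicalSNPDF0_add_mul hΩ.det_pos hrect
  simp only [dotProduct_smul, smul_dotProduct, mulVec_smul, he₁, he₂, smul_eq_mul, mul_one]
    at this
  convert this using 3
  ring

/-- If a classical skew-normal density with block-diagonal `Ω` factorizes as a
product of a function of the first block of coordinates and a function of the
second block, then at least one of the two corresponding blocks of the slant
parameter `α` vanishes. -/
theorem classical_skew_normal_factorization {d₁ d₂ : ℕ}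
    (Ω : Matrix (Fin d₁ ⊕ Fin d₂) (Fin d₁ ⊕ Fin d₂) ℝ) (hΩ : Ω.PosDef)
    (hblock : ∀ (i : Fin d₁) (j : Fin d₂),
      Ω (Sum.inl i) (Sum.inr j) = 0 ∧ Ω (Sum.inr j) (Sum.inl i) = 0)
    (α : Fin d₁ ⊕ Fin d₂ → ℝ)
    (hfact : ∃ (g₁ : (Fin d₁ → ℝ) → ℝ) (g₂ : (Fin d₂ → ℝ) → ℝ),
      ∀ x : Fin d₁ ⊕ Fin d₂ → ℝ,
        classicalSNPDF0 Ω α x = g₁ (x ∘ Sum.inl) * g₂ (x ∘ Sum.inr)) :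
    (∀ i : Fin d₁, α (Sum.inl i) = 0) ∨ (∀ j : Fin d₂, α (Sum.inr j) = 0) :=
  classical_skew_normal_factorization_general Ω hΩ α hfact
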